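/- Orthogonality of the time reconstruction (Lemma 4.2, eq. (4.4)): the time reconstruction Û satisfies ∫_I ⟨V(t) − Û(t), W''(t)⟩_H dt = 0 for every H-valued polynomial W of degree at most q−1. -/

import Mathlib

open scoped RealInnerProductSpace
open MeasureTheory

/-- Evaluation of the `H`-valued polynomial with coefficients `c` (degree at most `k`):
`t ↦ ∑_{i=0}^{k} tⁱ • c i`. -/
noncomputable def polyEval {H : Type*} [NormedAddCommGroup H] [NormedSpace ℝ H]
    (k : ℕ) (c : ℕ → H) (t : ℝ) : H :=
  ∑ i ∈ Finset.range (k + 1), t ^ i • c i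

/-- Coefficients of the termwise derivative of the polynomial with coefficients `c`. -/
noncomputable def dC {H : Type*} [NormedAddCommGroup H] [NormedSpace ℝ H]
    (c : ℕ → H) : ℕ → H := fun i => ((i : ℝ) + 1) • c (i + 1)

/-- `u` is the coefficient function of the time reconstruction `Û` (a polynomial of degree at
most `q+1`) of the polynomial `V` with coefficient function `v` (degree at most `q`), with
jump `j`, on the interval `I = [t₀, t₁]`:
(i) `∫_I ⟨Û'' - V'', W⟩ = ⟨j, W(t₀)⟩` for all `H`-valued polynomials `W` of degree at most `q-1`;
(ii) `Û(t₀) = V(t₀)`; (iii) `Û'(t₀) = V'(t₀) - j`. -/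
def IsTimeRecon {H : Type*} [NormedAddCommGroup H] [InnerProductSpace ℝ H]
    (t₀ t₁ : ℝ) (q : ℕ) (v : ℕ → H) (j : H) (u : ℕ → H) : Prop :=
  (∀ i, q + 1 < i → u i = 0) ∧
  (∀ w : ℕ → H, (∀ i, q ≤ i → w i = 0) →
    (∫ t in t₀..t₁,
        ⟪polyEval (q + 1) (dC (dC u)) t - polyEval (q + 1) (dC (dC v)) t,
          polyEval (q + 1) w t⟫) = ⟪j, polyEval (q + 1) w t₀⟫) ∧
  polyEval (q + 1) u t₀ = polyEval (q + 1) v t₀ ∧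
  polyEval (q + 1) (dC u) t₀ = polyEval (q + 1) (dC v) t₀ - j

section aux
variable {H : Type*} [NormedAddCommGroup H] [NormedSpace ℝ H]

lemma polyEval_eq_of_vanish (k m : ℕ) (hm : m ≤ k) (c : ℕ → H)
    (hc : ∀ i, m < i → c i = 0) (t : ℝ) :
    polyEval k c t = polyEval m c t := by
  unfold polyEval
  refine (Finset.sum_subset (Finset.range_subset_range.2 (by omega)) ?_).symm
  intro i hi hni
  simp only [Finset.mem_range] at hi hni
  rw [hc i (by omega), smul_zero]

lemma vanish_dC (k : ℕ) (c : ℕ → H) (hc : ∀ i, k < i → c i = 0) :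
    ∀ i, k < i → dC c i = 0 := by
  intro i hi
  simp [dC, hc (i + 1) (by omega)]

lemma continuous_polyEval (k : ℕ) (c : ℕ → H) : Continuous (polyEval k c) := by
  unfold polyEval
  exact continuous_finset_sum _ fun i _ => (continuous_pow i).smul continuous_const

lemma hasDerivAt_polyEval (k : ℕ) (c : ℕ → H) (t : ℝ) :
    HasDerivAt (polyEval (k + 1) c) (polyEval k (dC c) t) t := by
  have h : HasDerivAt (fun s : ℝ => ∑ i ∈ Finset.range (k + 2), s ^ i • c i)
      (∑ i ∈ Finset.range (k + 2), ((i : ℝ) * t ^ (i - 1)) • c i) t :=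
    HasDerivAt.fun_sum fun i _ => (hasDerivAt_pow i t).smul_const (c i)
  have he : (∑ i ∈ Finset.range (k + 2), ((i : ℝ) * t ^ (i - 1)) • c i)
      = polyEval k (dC c) t := by
    rw [Finset.sum_range_succ']
    simp only [polyEval, dC, Nat.cast_zero, zero_mul, zero_smul, add_zero]
    refine Finset.sum_congr rfl fun i _ => ?_
    push_cast
    rw [smul_smul]
    ring_nf
  rw [← he]
  exact h

lemma hasDerivAt_polyEval' (k : ℕ) (c : ℕ → H) (hc : ∀ i, k + 1 < i → c i = 0) (t : ℝ) :
    HasDerivAt (polyEval (k + 1) c) (polyEval (k + 1) (dC c) t) t := by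
  have he : polyEval (k + 1) (dC c) t = polyEval k (dC c) t :=
    polyEval_eq_of_vanish (k + 1) k (by omega) _
      (fun i hi => by simp [dC, hc (i + 1) (by omega)]) t
  rw [he]
  exact hasDerivAt_polyEval k c t

end aux


/-- Orthogonality of the time reconstruction:
`∫_I ⟨V - Û, W''⟩ = 0` for every `H`-valued polynomial `W` of degree at most `q - 1`. -/
theorem time_reconstruction_orthogonality
    {H : Type*} [NormedAddCommGroup H] [InnerProductSpace ℝ H] [CompleteSpace H]
    (t₀ t₁ : ℝ) (h01 : t₀ < t₁) (q : ℕ) (hq : 2 ≤ q)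
    (v : ℕ → H) (hv : ∀ i, q < i → v i = 0) (j : H)
    (u : ℕ → H) (hu : IsTimeRecon t₀ t₁ q v j u) :
    ∀ w : ℕ → H, (∀ i, q ≤ i → w i = 0) →
      (∫ t in t₀..t₁,
        ⟪polyEval (q + 1) v t - polyEval (q + 1) u t,
          polyEval (q + 1) (dC (dC w)) t⟫) = 0 := by
  intro w hw
  obtain ⟨hu1, hInt, hU0, hU1⟩ := hu
  have hv1 : ∀ i, q + 1 < i → v i = 0 := fun i hi => hv i (by omega)
  have hw1 : ∀ i, q + 1 < i → w i = 0 := fun i hi => hw i (by omega)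
  -- derivative facts
  have dU : ∀ t, HasDerivAt (polyEval (q + 1) u) (polyEval (q + 1) (dC u) t) t :=
    hasDerivAt_polyEval' q u hu1
  have dV : ∀ t, HasDerivAt (polyEval (q + 1) v) (polyEval (q + 1) (dC v) t) t :=
    hasDerivAt_polyEval' q v hv1
  have dW : ∀ t, HasDerivAt (polyEval (q + 1) w) (polyEval (q + 1) (dC w) t) t :=
    hasDerivAt_polyEval' q w hw1
  have dDU : ∀ t, HasDerivAt (polyEval (q + 1) (dC u)) (polyEval (q + 1) (dC (dC u)) t) t :=
    hasDerivAt_polyEval' q (dC u) (vanish_dC (q + 1) u hu1)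
  have dDV : ∀ t, HasDerivAt (polyEval (q + 1) (dC v)) (polyEval (q + 1) (dC (dC v)) t) t :=
    hasDerivAt_polyEval' q (dC v) (vanish_dC (q + 1) v hv1)
  have dDW : ∀ t, HasDerivAt (polyEval (q + 1) (dC w)) (polyEval (q + 1) (dC (dC w)) t) t :=
    hasDerivAt_polyEval' q (dC w) (vanish_dC (q + 1) w hw1)
  -- Claim A : Û'(t₁) = V'(t₁)
  have hA : polyEval (q + 1) (dC u) t₁ = polyEval (q + 1) (dC v) t₁ := by
    have key : ∀ x : H,
        ⟪polyEval (q + 1) (dC u) t₁ - polyEval (q + 1) (dC v) t₁, x⟫ = 0 := by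
      intro x
      set w₀ : ℕ → H := fun i => if i = 0 then x else 0 with hw₀def
      have hw₀ : ∀ i, q ≤ i → w₀ i = 0 := by
        intro i hi
        simp only [hw₀def]
        rw [if_neg (by omega)]
      have hval : ∀ t : ℝ, polyEval (q + 1) w₀ t = x := by
        intro t
        unfold polyEval
        rw [Finset.sum_eq_single 0]
        · simp [hw₀def]
        · intro i _ hi
          simp [hw₀def, hi]
        · simp
      have hi := hInt w₀ hw₀
      simp only [hval] at hi
      have hder : ∀ t ∈ Set.uIcc t₀ t₁,
          HasDerivAt (fun t => ⟪polyEval (q + 1) (dC u) t - polyEval (q + 1) (dC v) t, x⟫)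
            (⟪polyEval (q + 1) (dC (dC u)) t - polyEval (q + 1) (dC (dC v)) t, x⟫) t := by
        intro t _
        have := HasDerivAt.inner ℝ ((dDU t).sub (dDV t)) (hasDerivAt_const t x)
        simpa using this
      have hcont : Continuous fun t =>
          ⟪polyEval (q + 1) (dC (dC u)) t - polyEval (q + 1) (dC (dC v)) t, x⟫ :=
        ((continuous_polyEval _ _).sub (continuous_polyEval _ _)).inner continuous_const
      have ftc := intervalIntegral.integral_eq_sub_of_hasDerivAt hder
        (hcont.intervalIntegrable t₀ t₁)
      rw [hi] at ftc
      have h0 : polyEval (q + 1) (dC u) t₀ - polyEval (q + 1) (dC v) t₀ = -j := by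
        rw [hU1]; abel
      rw [h0, inner_neg_left] at ftc
      linarith [ftc]
    have := key (polyEval (q + 1) (dC u) t₁ - polyEval (q + 1) (dC v) t₁)
    rw [inner_self_eq_zero] at this
    exact sub_eq_zero.mp this
  -- Claim B : Û(t₁) = V(t₁)
  have hB : polyEval (q + 1) u t₁ = polyEval (q + 1) v t₁ := by
    have key : ∀ x : H, ⟪polyEval (q + 1) u t₁ - polyEval (q + 1) v t₁, x⟫ = 0 := by
      intro x
      set w₁ : ℕ → H := fun i => if i = 0 then t₁ • x else if i = 1 then -x else 0 with hw₁def
      have hw₁ : ∀ i, q ≤ i → w₁ i = 0 := by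
        intro i hi
        simp only [hw₁def]
        rw [if_neg (by omega), if_neg (by omega)]
      have hval : ∀ t : ℝ, polyEval (q + 1) w₁ t = (t₁ - t) • x := by
        intro t
        rw [polyEval_eq_of_vanish (q + 1) 1 (by omega) w₁
          (fun i hi => by simp only [hw₁def]; rw [if_neg (by omega), if_neg (by omega)]) t]
        simp only [polyEval, hw₁def, Finset.sum_range_succ, Finset.sum_range_zero,
          pow_zero, pow_one, one_smul, zero_add, if_pos, if_neg (by norm_num : (1:ℕ) ≠ 0)]
        norm_num
        module
      have hi := hInt w₁ hw₁
      simp only [hval] at hi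
      have hder : ∀ t ∈ Set.uIcc t₀ t₁,
          HasDerivAt (fun t => (t₁ - t) *
              ⟪polyEval (q + 1) (dC u) t - polyEval (q + 1) (dC v) t, x⟫ +
              ⟪polyEval (q + 1) u t - polyEval (q + 1) v t, x⟫)
            (⟪polyEval (q + 1) (dC (dC u)) t - polyEval (q + 1) (dC (dC v)) t, (t₁ - t) • x⟫)
            t := by
        intro t _
        have h1 : HasDerivAt (fun t : ℝ => t₁ - t) (-1) t := by
          simpa using (hasDerivAt_id t).const_sub t₁
        have h2 : HasDerivAt
            (fun t => ⟪polyEval (q + 1) (dC u) t - polyEval (q + 1) (dC v) t, x⟫)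
            (⟪polyEval (q + 1) (dC (dC u)) t - polyEval (q + 1) (dC (dC v)) t, x⟫) t := by
          simpa using HasDerivAt.inner ℝ ((dDU t).sub (dDV t)) (hasDerivAt_const t x)
        have h3 : HasDerivAt
            (fun t => ⟪polyEval (q + 1) u t - polyEval (q + 1) v t, x⟫)
            (⟪polyEval (q + 1) (dC u) t - polyEval (q + 1) (dC v) t, x⟫) t := by
          simpa using HasDerivAt.inner ℝ ((dU t).sub (dV t)) (hasDerivAt_const t x)
        have := (h1.mul h2).add h3
        refine this.congr_deriv ?_
        rw [real_inner_smul_right]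
        ring
      have hcont : Continuous fun t =>
          ⟪polyEval (q + 1) (dC (dC u)) t - polyEval (q + 1) (dC (dC v)) t, (t₁ - t) • x⟫ :=
        ((continuous_polyEval _ _).sub (continuous_polyEval _ _)).inner
          (((continuous_const.sub continuous_id).smul continuous_const))
      have ftc := intervalIntegral.integral_eq_sub_of_hasDerivAt hder
        (hcont.intervalIntegrable t₀ t₁)
      rw [hi] at ftc
      have h0 : polyEval (q + 1) (dC u) t₀ - polyEval (q + 1) (dC v) t₀ = -j := by
        rw [hU1]; abel
      have h0' : polyEval (q + 1) u t₀ - polyEval (q + 1) v t₀ = 0 := by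
        rw [hU0]; abel
      rw [h0, h0', inner_zero_left, inner_neg_left, real_inner_smul_right] at ftc
      linear_combination -ftc
    have := key (polyEval (q + 1) u t₁ - polyEval (q + 1) v t₁)
    rw [inner_self_eq_zero] at this
    exact sub_eq_zero.mp this
  -- Main computation
  have hiw := hInt w hw
  have hder : ∀ t ∈ Set.uIcc t₀ t₁,
      HasDerivAt (fun t =>
          ⟪polyEval (q + 1) v t - polyEval (q + 1) u t, polyEval (q + 1) (dC w) t⟫ -
          ⟪polyEval (q + 1) (dC v) t - polyEval (q + 1) (dC u) t, polyEval (q + 1) w t⟫)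
        (⟪polyEval (q + 1) v t - polyEval (q + 1) u t, polyEval (q + 1) (dC (dC w)) t⟫ -
          ⟪polyEval (q + 1) (dC (dC v)) t - polyEval (q + 1) (dC (dC u)) t,
            polyEval (q + 1) w t⟫) t := by
    intro t _
    have h1 := HasDerivAt.inner ℝ ((dV t).sub (dU t)) (dDW t)
    have h2 := HasDerivAt.inner ℝ ((dDV t).sub (dDU t)) (dW t)
    have := h1.sub h2
    refine this.congr_deriv ?_
    simp only [Pi.sub_apply]
    ring
  have hcont1 : Continuous fun t =>
      ⟪polyEval (q + 1) v t - polyEval (q + 1) u t, polyEval (q + 1) (dC (dC w)) t⟫ :=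
    ((continuous_polyEval _ _).sub (continuous_polyEval _ _)).inner (continuous_polyEval _ _)
  have hcont2 : Continuous fun t =>
      ⟪polyEval (q + 1) (dC (dC v)) t - polyEval (q + 1) (dC (dC u)) t,
        polyEval (q + 1) w t⟫ :=
    ((continuous_polyEval _ _).sub (continuous_polyEval _ _)).inner (continuous_polyEval _ _)
  have ftc := intervalIntegral.integral_eq_sub_of_hasDerivAt hder
    ((hcont1.sub hcont2).intervalIntegrable t₀ t₁)
  rw [intervalIntegral.integral_sub (hcont1.intervalIntegrable t₀ t₁)
    (hcont2.intervalIntegrable t₀ t₁)] at ftc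
  have hswap : (∫ t in t₀..t₁,
      ⟪polyEval (q + 1) (dC (dC v)) t - polyEval (q + 1) (dC (dC u)) t,
        polyEval (q + 1) w t⟫) = -⟪j, polyEval (q + 1) w t₀⟫ := by
    rw [← hiw, ← intervalIntegral.integral_neg]
    congr 1
    funext t
    rw [← inner_neg_left, neg_sub]
  rw [hswap] at ftc
  have e1 : polyEval (q + 1) v t₁ - polyEval (q + 1) u t₁ = 0 := by rw [hB]; abel
  have e2 : polyEval (q + 1) (dC v) t₁ - polyEval (q + 1) (dC u) t₁ = 0 := by rw [hA]; abel
  have e3 : polyEval (q + 1) v t₀ - polyEval (q + 1) u t₀ = 0 := by rw [hU0]; abel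
  have e4 : polyEval (q + 1) (dC v) t₀ - polyEval (q + 1) (dC u) t₀ = j := by
    rw [hU1]; abel
  rw [e1, e2, e3, e4, inner_zero_left, inner_zero_left, inner_zero_left] at ftc
  linarith [ftc]
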